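/- arXiv:2006.13684 — 3 statements merged into one kernel-verified Lean document; each statement's English description precedes it below -/
import Mathlib

section
/- Let G and H be 2-connected graphs with a 2-isomorphism φ : E(G) → E(H). Then G and H are φ-isomorphic if and only if φ maps the family of edge-incidence sets {E_G(v) : v ∈ V(G)} bijectively onto the family {E_H(w) : w ∈ V(H)}. -/
open SimpleGraph

/-- The edge set of a cycle of `G`. -/
def EdgeCycle {V : Type*} (G : SimpleGraph V) (s : Set (Sym2 V)) : Prop :=
  ∃ (v : V) (w : G.Walk v v), w.IsCycle ∧ s = {e | e ∈ w.edges}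

/-- A bijection between the edge sets is a 2-isomorphism if it and its inverse
preserve edge sets of cycles. -/
def TwoIso {V W : Type*} (G : SimpleGraph V) (H : SimpleGraph W)
    (φ : G.edgeSet ≃ H.edgeSet) : Prop :=
  ∀ s : Set G.edgeSet,
    EdgeCycle G (Subtype.val '' s) ↔ EdgeCycle H (Subtype.val '' (φ '' s))

/-- A graph isomorphism `ψ` is a `φ`-isomorphism if `φ(uv) = ψ(u)ψ(v)` for every edge. -/
def PhiIso {V W : Type*} (G : SimpleGraph V) (H : SimpleGraph W)
    (φ : G.edgeSet ≃ H.edgeSet) (ψ : G ≃g H) : Prop :=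
  ∀ e : G.edgeSet, (φ e : Sym2 W) = Sym2.map (fun x => ψ x) (e : Sym2 V)

/-- A graph is 2-connected: connected, at least 3 vertices, no cut vertex. -/
def TwoConnected {V : Type*} [Fintype V] (G : SimpleGraph V) : Prop :=
  G.Connected ∧ 3 ≤ Fintype.card V ∧ ∀ v : V, (G.induce ({v}ᶜ : Set V)).Connected

lemma exists_adj_of_reachable {V : Type*} {G : SimpleGraph V} {a c : V}
    (h : G.Reachable a c) (hne : a ≠ c) : ∃ x, G.Adj a x := by
  obtain ⟨w⟩ := h
  cases w with
  | nil => exact absurd rfl hne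
  | cons h p => exact ⟨_, h⟩

lemma myStarInj {V : Type*} [Fintype V] {G : SimpleGraph V} (hG : TwoConnected G)
    {a b : V}
    (h : {e : G.edgeSet | a ∈ (e : Sym2 V)} = {e : G.edgeSet | b ∈ (e : Sym2 V)}) :
    a = b := by
  classical
  by_contra hab
  obtain ⟨hconn, hcard, hcut⟩ := hG
  have hnb : ∀ x, G.Adj a x → x = b := by
    intro x hx
    have hmem : (⟨s(a,x), hx⟩ : G.edgeSet) ∈ {e : G.edgeSet | a ∈ (e : Sym2 V)} := by
      simp
    rw [h] at hmem
    simp only [Set.mem_setOf_eq, Sym2.mem_iff] at hmem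
    rcases hmem with h1 | h1
    · exact absurd h1.symm hab
    · exact h1.symm
  obtain ⟨c, hca, hcb⟩ : ∃ c, c ≠ a ∧ c ≠ b := by
    by_contra hc
    push_neg at hc
    have hsub : (Finset.univ : Finset V) ⊆ {a, b} := by
      intro x _
      by_cases hx : x = a
      · simp [hx]
      · simp [hc x hx]
    have := Finset.card_le_card hsub
    have h2 : ({a, b} : Finset V).card ≤ 2 :=
      (Finset.card_insert_le _ _).trans (by simp)
    rw [Finset.card_univ] at this
    omega
  have ha : a ∈ ({b}ᶜ : Set V) := by simp [hab]
  have hcmem : c ∈ ({b}ᶜ : Set V) := by simp [hcb]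
  have hreach := (hcut b).preconnected ⟨a, ha⟩ ⟨c, hcmem⟩
  have hne : (⟨a, ha⟩ : ({b}ᶜ : Set V)) ≠ ⟨c, hcmem⟩ := by
    simp only [ne_eq, Subtype.mk.injEq]
    exact fun h' => hca h'.symm
  obtain ⟨y, hy⟩ := exists_adj_of_reachable hreach hne
  have hadj : G.Adj a (y : V) := hy
  have : (y : V) = b := hnb _ hadj
  exact y.2 (by simp [this])

/-- `G` and `H` are 2-connected with a 2-isomorphism `φ`; then `G` and `H` are
`φ`-isomorphic iff `φ` maps the family of edge-incidence sets of `G` bijectively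
onto the family of edge-incidence sets of `H`. -/
theorem stmt1 {V W : Type*} [Fintype V] [Fintype W]
    (G : SimpleGraph V) (H : SimpleGraph W)
    (hG : TwoConnected G) (hH : TwoConnected H)
    (φ : G.edgeSet ≃ H.edgeSet) (hφ : TwoIso G H φ) :
    (∃ ψ : G ≃g H, PhiIso G H φ ψ) ↔
      (fun s : Set G.edgeSet => φ '' s) ''
          {S | ∃ v : V, S = {e : G.edgeSet | v ∈ (e : Sym2 V)}}
        = {S | ∃ w : W, S = {e : H.edgeSet | w ∈ (e : Sym2 W)}} := by
  classical
  constructor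
  · rintro ⟨ψ, hψ⟩
    have key : ∀ v : V, φ '' {e : G.edgeSet | v ∈ (e : Sym2 V)}
        = {f : H.edgeSet | ψ v ∈ (f : Sym2 W)} := by
      intro v
      ext f
      constructor
      · rintro ⟨e, he, rfl⟩
        simp only [Set.mem_setOf_eq] at he ⊢
        rw [hψ e]
        exact Sym2.mem_map.mpr ⟨v, he, rfl⟩
      · intro hf
        refine ⟨φ.symm f, ?_, by simp⟩
        simp only [Set.mem_setOf_eq] at hf ⊢
        have h2 := hψ (φ.symm f)
        rw [Equiv.apply_symm_apply] at h2
        rw [h2] at hf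
        obtain ⟨x, hx, hxe⟩ := Sym2.mem_map.mp hf
        rwa [ψ.toEquiv.injective hxe] at hx
    ext S
    simp only [Set.mem_image, Set.mem_setOf_eq]
    constructor
    · rintro ⟨S', ⟨v, rfl⟩, rfl⟩
      exact ⟨ψ v, key v⟩
    · rintro ⟨w, rfl⟩
      obtain ⟨v, rfl⟩ := ψ.toEquiv.surjective w
      exact ⟨_, ⟨v, rfl⟩, key v⟩
  · intro h
    have hfun : ∀ v : V, ∃ w : W,
        φ '' {e : G.edgeSet | v ∈ (e : Sym2 V)} = {f : H.edgeSet | w ∈ (f : Sym2 W)} := by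
      intro v
      have hm : φ '' {e : G.edgeSet | v ∈ (e : Sym2 V)} ∈
          {S | ∃ w : W, S = {f : H.edgeSet | w ∈ (f : Sym2 W)}} := by
        rw [← h]
        exact ⟨_, ⟨v, rfl⟩, rfl⟩
      exact hm
    choose ψf hψf using hfun
    have hinj : Function.Injective ψf := by
      intro a b hab
      apply myStarInj hG
      have h1 := (hψf a).trans (by rw [hab, ← hψf b])
      exact Set.image_injective.mpr φ.injective h1
    have hsur : Function.Surjective ψf := by
      intro w
      have hm : {f : H.edgeSet | w ∈ (f : Sym2 W)} ∈
          (fun s : Set G.edgeSet => φ '' s) ''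
            {S | ∃ v : V, S = {e : G.edgeSet | v ∈ (e : Sym2 V)}} := by
        rw [h]; exact ⟨w, rfl⟩
      obtain ⟨S, ⟨v, rfl⟩, hS⟩ := hm
      exact ⟨v, myStarInj hH ((hψf v).symm.trans hS)⟩
    have hmemφ : ∀ (v : V) (e : G.edgeSet),
        v ∈ (e : Sym2 V) ↔ ψf v ∈ ((φ e : H.edgeSet) : Sym2 W) := by
      intro v e
      constructor
      · intro hv
        have : φ e ∈ φ '' {e : G.edgeSet | v ∈ (e : Sym2 V)} := ⟨e, hv, rfl⟩
        rw [hψf v] at this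
        exact this
      · intro hv
        have h1 : φ e ∈ {f : H.edgeSet | ψf v ∈ (f : Sym2 W)} := hv
        rw [← hψf v] at h1
        obtain ⟨e', he', hee⟩ := h1
        rwa [φ.injective hee] at he'
    have hedge : ∀ (a b : V) (hab : G.Adj a b),
        ((φ ⟨s(a,b), hab⟩ : H.edgeSet) : Sym2 W) = s(ψf a, ψf b) := by
      intro a b hab
      have h1 : ψf a ∈ ((φ ⟨s(a,b), hab⟩ : H.edgeSet) : Sym2 W) :=
        (hmemφ a _).mp (by simp)
      have h2 : ψf b ∈ ((φ ⟨s(a,b), hab⟩ : H.edgeSet) : Sym2 W) :=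
        (hmemφ b _).mp (by simp)
      have hne : ψf a ≠ ψf b := fun hc => hab.ne (hinj hc)
      exact (Sym2.mem_and_mem_iff hne).mp ⟨h1, h2⟩
    have hadjiff : ∀ a b : V, H.Adj (ψf a) (ψf b) ↔ G.Adj a b := by
      intro a b
      constructor
      · intro hadj
        have hne : a ≠ b := fun hc => hadj.ne (by rw [hc])
        set f : H.edgeSet := ⟨s(ψf a, ψf b), hadj⟩ with hf
        have h1 : a ∈ ((φ.symm f : G.edgeSet) : Sym2 V) := by
          rw [hmemφ a (φ.symm f), Equiv.apply_symm_apply]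
          simp [hf]
        have h2 : b ∈ ((φ.symm f : G.edgeSet) : Sym2 V) := by
          rw [hmemφ b (φ.symm f), Equiv.apply_symm_apply]
          simp [hf]
        have heq := (Sym2.mem_and_mem_iff hne).mp ⟨h1, h2⟩
        have := (φ.symm f).2
        rw [heq] at this
        exact this
      · intro hadj
        have := (⟨s(a,b), hadj⟩ : G.edgeSet)
        have h1 := (φ (⟨s(a,b), hadj⟩ : G.edgeSet)).2
        rw [hedge a b hadj] at h1
        exact h1
    refine ⟨⟨Equiv.ofBijective ψf ⟨hinj, hsur⟩, ?_⟩, ?_⟩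
    · intro a b
      exact hadjiff a b
    · rintro ⟨e, he⟩
      induction e using Sym2.ind with
      | _ a b =>
        have hab : G.Adj a b := he
        have h1 := hedge a b hab
        simp only [Sym2.map_pair_eq]
        exact h1
end

section
/- For every partially signed linear permutation π⃗, the reversal distance d⃗(π⃗) to the signed identity equals the minimum, over all signed linear permutations π⃗′ agreeing in signs with π⃗, of d⃗(π⃗′). -/
/-- `ReachIn R k a b`: `b` is reachable from `a` in exactly `k` steps of `R`. -/
inductive ReachIn {α : Type*} (R : α → α → Prop) : ℕ → α → α → Prop
  | refl (a : α) : ReachIn R 0 a a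
  | step {k : ℕ} {a b c : α} : R a b → ReachIn R k b c → ReachIn R (k + 1) a c

/-- A partially signed sequence: a list of pairs (element, sign). -/
abbrev SP := List (ℕ × ℤ)

/-- Negation of a whole sequence: reverse the order and negate all signs. -/
def negSeg (l : SP) : SP := (l.map fun p => (p.1, -p.2)).reverse

/-- The reversal `ρ⃗(i,j)` (1-indexed, `1 ≤ i ≤ j ≤ n`): reverse the segment of
positions `i,…,j` and negate the signs of the reversed elements. -/
def srev (i j : ℕ) (l : SP) : SP :=
  l.take (i - 1) ++ negSeg ((l.drop (i - 1)).take (j - i + 1)) ++ l.drop j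

/-- One (linear) reversal step. -/
def SStep (l l' : SP) : Prop :=
  ∃ i j : ℕ, 1 ≤ i ∧ i ≤ j ∧ j ≤ l.length ∧ l' = srev i j l

/-- `l` agrees in signs with `σ`: same underlying sequence, and the signs agree
wherever the sign of `l` is nonzero. -/
def Agrees (l σ : SP) : Prop :=
  List.Forall₂ (fun p q => p.1 = q.1 ∧ (p.2 ≠ 0 → p.2 = q.2)) l σ

/-- The reversal distance from `π` to (the class of sequences agreeing in signs
with) the signed sequence `σ`. -/
noncomputable def sdist (π σ : SP) : ℕ :=
  sInf {k : ℕ | ∃ l' : SP, ReachIn SStep k π l' ∧ Agrees l' σ}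

/-- The signed identity permutation `(⟨1,+1⟩,…,⟨n,+1⟩)`. -/
def ident (n : ℕ) : SP := (List.range n).map fun t => (t + 1, 1)

/-- All signs are `+1` or `-1`. -/
def IsSigned (l : SP) : Prop := ∀ p ∈ l, p.2 = 1 ∨ p.2 = -1

/-- All signs are in `{+1, -1, 0}`. -/
def IsPartiallySigned (l : SP) : Prop := ∀ p ∈ l, p.2 = 1 ∨ p.2 = -1 ∨ p.2 = 0

/-- The underlying sequence is a permutation of `{1,…,n}`. -/
def IsPermSeq (l : SP) : Prop := (l.map Prod.fst).Perm (List.range' 1 l.length)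

/-!
Agreement in signs commutes with reversals: if `π` agrees with `σ`, applying the same reversal
to both keeps them in agreement. So every sorting sequence of a signed completion `σ` of `π` also
sorts `π`, and conversely an optimal sorting sequence of `π`, run backwards from the identity,
produces a signed completion of `π` sorted by the same number of reversals. Signed completions
are sortable at all (make every sign `+`, then sort by adjacent transpositions, each of which is
three reversals), so their distances are genuine minima and not the junk value `sInf ∅ = 0`.
-/

lemma negSeg_negSeg (l : SP) : negSeg (negSeg l) = l := by
  simp [negSeg, List.map_reverse, Function.comp_def]

lemma srev_eq_append {A B C : SP} (hB : B ≠ []) :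
    srev (A.length + 1) (A.length + B.length) (A ++ B ++ C) = A ++ negSeg B ++ C := by
  have hlen : A.length + B.length - (A.length + 1) + 1 = B.length := by
    have : B.length ≠ 0 := by simpa using hB
    omega
  simp only [srev, Nat.add_sub_cancel, hlen, List.append_assoc, List.take_left' rfl,
    List.drop_left' rfl]
  rw [← List.append_assoc A B C, List.drop_left' (by simp)]

lemma sStep_iff {l l' : SP} :
    SStep l l' ↔ ∃ A B C : SP, B ≠ [] ∧ l = A ++ B ++ C ∧ l' = A ++ negSeg B ++ C := by
  constructor
  · rintro ⟨i, j, hi, hij, hj, rfl⟩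
    refine ⟨l.take (i - 1), (l.drop (i - 1)).take (j - i + 1), l.drop j, ?_, ?_, rfl⟩
    · rw [← List.length_pos_iff, List.length_take, List.length_drop]; omega
    · rw [show l.drop j = (l.drop (i - 1)).drop (j - i + 1) by rw [List.drop_drop]; congr 1; omega]
      simp
  · rintro ⟨A, B, C, hB, rfl, rfl⟩
    have : B.length ≠ 0 := by simpa using hB
    exact ⟨A.length + 1, A.length + B.length, by omega, by omega, by simp, (srev_eq_append hB).symm⟩

lemma SStep.symm {l l' : SP} (h : SStep l l') : SStep l' l := by
  obtain ⟨A, B, C, hB, rfl, rfl⟩ := sStep_iff.1 h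
  exact sStep_iff.2 ⟨A, negSeg B, C, by simpa [negSeg] using hB, rfl, by rw [negSeg_negSeg]⟩

lemma SStep.cons {l l' : SP} (x : ℕ × ℤ) (h : SStep l l') : SStep (x :: l) (x :: l') := by
  obtain ⟨A, B, C, hB, rfl, rfl⟩ := sStep_iff.1 h
  exact sStep_iff.2 ⟨x :: A, B, C, hB, rfl, rfl⟩

lemma sStep_neg_head (p : ℕ × ℤ) (t : SP) : SStep (p :: t) ((p.1, -p.2) :: t) :=
  sStep_iff.2 ⟨[], [p], t, List.cons_ne_nil _ _, rfl, rfl⟩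

lemma IsSigned.of_sStep {l l' : SP} (hl : IsSigned l) (h : SStep l l') : IsSigned l' := by
  obtain ⟨A, B, C, -, rfl, rfl⟩ := sStep_iff.1 h
  intro p hp
  simp only [negSeg, List.mem_append, List.mem_reverse, List.mem_map] at hp
  rcases hp with (hp | ⟨q, hq, rfl⟩) | hp
  · exact hl p (by simp [hp])
  · rcases hl q (by simp [hq]) with h' | h' <;> simp [h']
  · exact hl p (by simp [hp])

lemma isSigned_ident (n : ℕ) : IsSigned (ident n) := by
  simp [IsSigned, ident]

lemma Agrees.refl (l : SP) : Agrees l l :=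
  List.forall₂_same.2 fun _ _ => ⟨rfl, fun _ => rfl⟩

lemma Agrees.trans {a b c : SP} (hab : Agrees a b) (hbc : Agrees b c) : Agrees a c := by
  induction hab generalizing c with
  | nil => cases hbc; exact .nil
  | cons hpq _ ih =>
    cases hbc with
    | cons hqr hbc =>
      exact .cons ⟨hpq.1.trans hqr.1, fun hp => (hpq.2 hp).trans (hqr.2 (hpq.2 hp ▸ hp))⟩ (ih hbc)

lemma Agrees.length_eq {l σ : SP} (h : Agrees l σ) : l.length = σ.length :=
  List.Forall₂.length_eq h

lemma Agrees.map_fst_eq {l σ : SP} (h : Agrees l σ) : l.map Prod.fst = σ.map Prod.fst := by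
  induction h with
  | nil => rfl
  | cons hpq _ ih => simp [hpq.1, ih]

lemma IsPermSeq.of_agrees {l σ : SP} (hl : IsPermSeq l) (h : Agrees l σ) : IsPermSeq σ := by
  rwa [IsPermSeq, ← h.map_fst_eq, ← h.length_eq]

lemma Agrees.negSeg {l σ : SP} (h : Agrees l σ) : Agrees (negSeg l) (negSeg σ) := by
  refine List.rel_reverse (List.rel_map ?_ h)
  rintro ⟨a, s⟩ ⟨b, t⟩ ⟨hab, hst⟩
  exact ⟨hab, fun hs => by simpa using hst (by simpa using hs)⟩

lemma Agrees.srev {l σ : SP} (i j : ℕ) (h : Agrees l σ) : Agrees (srev i j l) (srev i j σ) :=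
  List.rel_append (List.rel_append (List.forall₂_take _ h)
    (Agrees.negSeg (List.forall₂_take _ (List.forall₂_drop _ h)))) (List.forall₂_drop _ h)

lemma SStep.exists_agrees_left {a σ τ : SP} (h : SStep σ τ) (ha : Agrees a σ) :
    ∃ b, SStep a b ∧ Agrees b τ := by
  obtain ⟨i, j, hi, hij, hj, rfl⟩ := h
  exact ⟨srev i j a, ⟨i, j, hi, hij, ha.length_eq ▸ hj, rfl⟩, ha.srev i j⟩

lemma SStep.exists_agrees_right {a b σ : SP} (h : SStep a b) (ha : Agrees a σ) :
    ∃ τ, SStep σ τ ∧ Agrees b τ := by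
  obtain ⟨i, j, hi, hij, hj, rfl⟩ := h
  exact ⟨srev i j σ, ⟨i, j, hi, hij, ha.length_eq ▸ hj, rfl⟩, ha.srev i j⟩

lemma ReachIn.exists_agrees_left {k : ℕ} {σ τ : SP} (h : ReachIn SStep k σ τ) {a : SP}
    (ha : Agrees a σ) : ∃ b, ReachIn SStep k a b ∧ Agrees b τ := by
  induction h generalizing a with
  | refl => exact ⟨a, .refl a, ha⟩
  | step hs _ ih =>
    obtain ⟨a', ha', haσ'⟩ := hs.exists_agrees_left ha
    obtain ⟨b, hb, hbτ⟩ := ih haσ'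
    exact ⟨b, .step ha' hb, hbτ⟩

lemma ReachIn.exists_isSigned_agrees {k : ℕ} {a b τ : SP} (h : ReachIn SStep k a b)
    (hτ : IsSigned τ) (hb : Agrees b τ) :
    ∃ σ, IsSigned σ ∧ Agrees a σ ∧ ReachIn SStep k σ τ := by
  induction h with
  | refl => exact ⟨τ, hτ, hb, .refl τ⟩
  | step hs _ ih =>
    obtain ⟨σ', hσ', hσ'a, hσ'τ⟩ := ih hb
    obtain ⟨σ, hσ, hσa⟩ := hs.symm.exists_agrees_right hσ'a
    exact ⟨σ, hσ'.of_sStep hσ, hσa, .step hσ.symm hσ'τ⟩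

lemma ReachIn.exists_of_reflTransGen {α : Type*} {R : α → α → Prop} {a b : α}
    (h : Relation.ReflTransGen R a b) : ∃ k, ReachIn R k a b := by
  induction h using Relation.ReflTransGen.head_induction_on with
  | refl => exact ⟨0, .refl _⟩
  | head hac _ ih =>
    obtain ⟨k, hk⟩ := ih
    exact ⟨k + 1, .step hac hk⟩

lemma reflTransGen_sStep_cons {l l' : SP} (x : ℕ × ℤ) (h : Relation.ReflTransGen SStep l l') :
    Relation.ReflTransGen SStep (x :: l) (x :: l') :=
  h.lift (x :: ·) fun _ _ => SStep.cons x

def plusSigned (L : List ℕ) : SP := L.map (·, 1)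

lemma ident_eq_plusSigned (n : ℕ) : ident n = plusSigned (List.range' 1 n) := by
  simp only [ident, plusSigned, List.range'_eq_map_range, List.map_map]
  exact List.map_congr_left fun x _ => by simp [Nat.add_comm]

lemma reflTransGen_plusSigned_swap (x y : ℕ) (t : SP) :
    Relation.ReflTransGen SStep ((y, 1) :: (x, 1) :: t) ((x, 1) :: (y, 1) :: t) := by
  have hrev : SStep ((y, 1) :: (x, 1) :: t) ((x, -1) :: (y, -1) :: t) :=
    sStep_iff.2 ⟨[], [(y, 1), (x, 1)], t, by simp, rfl, by simp [negSeg]⟩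
  have hx : SStep ((x, -1) :: (y, -1) :: t) ((x, 1) :: (y, -1) :: t) := by
    simpa using sStep_neg_head (x, -1) ((y, -1) :: t)
  have hy : SStep ((x, 1) :: (y, -1) :: t) ((x, 1) :: (y, 1) :: t) := by
    simpa using (sStep_neg_head (y, -1) t).cons (x, 1)
  exact .head hrev (.head hx (.single hy))

lemma reflTransGen_plusSigned_of_perm {L M : List ℕ} (h : L.Perm M) :
    Relation.ReflTransGen SStep (plusSigned L) (plusSigned M) := by
  induction h with
  | nil => rfl
  | cons x _ ih => exact reflTransGen_sStep_cons (x, 1) ih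
  | swap x y l => exact reflTransGen_plusSigned_swap x y (plusSigned l)
  | trans _ _ ih₁ ih₂ => exact ih₁.trans ih₂

lemma IsSigned.reflTransGen_plusSigned {l : SP} (h : IsSigned l) :
    Relation.ReflTransGen SStep l (plusSigned (l.map Prod.fst)) := by
  induction l with
  | nil => rfl
  | cons p t ih =>
    have ht := reflTransGen_sStep_cons p (ih fun q hq => h q (List.mem_cons_of_mem _ hq))
    obtain ⟨a, s⟩ := p
    rcases h (a, s) List.mem_cons_self with rfl | rfl
    · exact ht
    · simpa [plusSigned] using ht.tail (sStep_neg_head (a, -1) _)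

lemma IsSigned.reflTransGen_ident {σ : SP} (hσ : IsSigned σ) (hperm : IsPermSeq σ) :
    Relation.ReflTransGen SStep σ (ident σ.length) := by
  rw [ident_eq_plusSigned]
  exact hσ.reflTransGen_plusSigned.trans (reflTransGen_plusSigned_of_perm hperm)

lemma IsSigned.exists_reachIn_sdist {σ : SP} (hσ : IsSigned σ) (hperm : IsPermSeq σ) :
    ∃ l, ReachIn SStep (sdist σ (ident σ.length)) σ l ∧ Agrees l (ident σ.length) := by
  obtain ⟨k, hk⟩ := ReachIn.exists_of_reflTransGen (hσ.reflTransGen_ident hperm)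
  exact Nat.sInf_mem (s := {k | ∃ l, ReachIn SStep k σ l ∧ Agrees l (ident σ.length)})
    ⟨k, _, hk, Agrees.refl _⟩

theorem stmt4_general (π : SP) (hperm : IsPermSeq π) :
    sdist π (ident π.length) =
      sInf {k : ℕ | ∃ σ : SP, IsSigned σ ∧ Agrees π σ ∧ k = sdist σ (ident π.length)} := by
  apply csInf_eq_csInf_of_forall_exists_le
  · rintro k ⟨l, hπl, hl⟩
    obtain ⟨σ, hσ, hπσ, hσι⟩ := hπl.exists_isSigned_agrees (isSigned_ident _) hl
    exact ⟨_, ⟨σ, hσ, hπσ, rfl⟩, Nat.sInf_le ⟨_, hσι, Agrees.refl _⟩⟩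
  · rintro _ ⟨σ, hσ, hπσ, rfl⟩
    obtain ⟨l, hσl, hl⟩ := hσ.exists_reachIn_sdist (hperm.of_agrees hπσ)
    rw [← hπσ.length_eq] at hσl hl
    obtain ⟨a, hπa, ha⟩ := hσl.exists_agrees_left hπσ
    exact ⟨_, ⟨a, hπa, ha.trans hl⟩, le_rfl⟩

/-- For every partially signed linear permutation `π`, the reversal distance of
`π` to the signed identity equals the minimum of the reversal distances of the
signed linear permutations agreeing in signs with `π`. -/
theorem stmt4 (π : SP) (hperm : IsPermSeq π) (hps : IsPartiallySigned π) :
    sdist π (ident π.length) =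
      sInf {k : ℕ | ∃ σ : SP, IsSigned σ ∧ Agrees π σ ∧ k = sdist σ (ident π.length)} :=
  stmt4_general π hperm
end

section
/- Let G be a 2-connected graph with a Whitney separation (A,B), and let G′ be obtained from G by the Whitney switch with respect to (A,B). Then the identity map on the edges (interpreting each edge of G[A] and of G[B] as itself in G′) is a 2-isomorphism from G to G′, i.e., a set of edges forms a cycle in G if and only if it forms a cycle in G′. -/
open SimpleGraph

/-- `(A,B)` is a Whitney separation of `G`: `A ∪ B = V(G)`, `A∖B ≠ ∅ ≠ B∖A`,
`|A ∩ B| = 2`, and no edge joins `A∖B` to `B∖A`. -/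
def WhitneySep {V : Type*} (G : SimpleGraph V) (A B : Set V) : Prop :=
  A ∪ B = Set.univ ∧ (A \ B).Nonempty ∧ (B \ A).Nonempty ∧
    (∃ u v : V, u ≠ v ∧ A ∩ B = {u, v}) ∧
    ∀ x ∈ A \ B, ∀ y ∈ B \ A, ¬G.Adj x y

open Classical in
/-- The Whitney switch with respect to a Whitney separation with side `B` and
separator `{u,v}`: for every `w ∈ B ∖ {u,v}`, each edge `uw` is replaced by `vw`
and each edge `vw` by `uw`; all other edges are unchanged. -/
noncomputable def wswitch {V : Type*} (G : SimpleGraph V) (B : Set V) (u v : V) :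
    SimpleGraph V where
  Adj x y :=
    if x ∈ B \ {u, v} ∨ y ∈ B \ {u, v} then
      G.Adj (Equiv.swap u v x) (Equiv.swap u v y)
    else G.Adj x y
  symm := by
    constructor
    intro x y hxy
    by_cases hc : x ∈ B \ {u, v} ∨ y ∈ B \ {u, v}
    · rw [if_pos hc] at hxy
      rw [if_pos hc.symm]
      exact hxy.symm
    · rw [if_neg hc] at hxy
      rw [if_neg fun hcc => hc hcc.symm]
      exact hxy.symm
  loopless := by
    constructor
    intro x hx
    by_cases hc : x ∈ B \ {u, v} ∨ x ∈ B \ {u, v}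
    · rw [if_pos hc] at hx
      exact G.loopless.irrefl _ hx
    · rw [if_neg hc] at hx
      exact G.loopless.irrefl _ hx

open Classical in
/-- The edge map induced by the Whitney switch: an edge with an endpoint in
`B ∖ A` has its endpoints `u` and `v` swapped; every other edge (an edge of
`G[A]`, or an edge of `G[B]` inside the separator) is kept as itself. -/
noncomputable def switchEdgeMap {V : Type*} (B A : Set V) (u v : V)
    (e : Sym2 V) : Sym2 V :=
  if ∃ x, x ∈ e ∧ x ∈ B \ A then Sym2.map (Equiv.swap u v) e else e

/-!
Write `σ` for the transposition of `u` and `v`. Since `B ∖ {u, v} = B ∖ A`, an edge `e` lies in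
the switched graph `G'` iff `switchEdgeMap e` lies in `G`; the edge map is an involution, fixes
the edges of a walk inside `A` and acts as `σ` on the edges of a walk inside `B`. So walks of `G`
inside `A` are walks of `G'`, and `σ` carries walks of `G` inside `B` to walks of `G'`.
A cycle of `G` that meets both `A ∖ B` and `B ∖ A` must pass through `u` and `v` (a cycle meeting
the separator at most once stays on one side), so it splits into a `u`–`v` path inside `A` and a
`v`–`u` path inside `B`; their images are two `u`–`v` paths of `G'` meeting only at their ends,
which glue to a cycle. The converse is the same argument for `G'`, as switching twice gives `G`.
-/

lemma List.image_setOf_mem {α β : Type*} (f : α → β) (l : List α) :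
    f '' {x | x ∈ l} = {y | y ∈ l.map f} := by
  ext; simp

namespace SimpleGraph

variable {V W : Type*} {G : SimpleGraph V} {H : SimpleGraph W}

lemma mem_edgeSet_comap_iff {φ : V → W} {e : Sym2 V} :
    e ∈ (H.comap φ).edgeSet ↔ e.map φ ∈ H.edgeSet := by
  induction e using Sym2.ind
  rfl

namespace Walk

def transferMap (φ : V ≃ W) {a b : V} (w : G.Walk a b)
    (hw : ∀ e ∈ w.edges, e.map φ ∈ H.edgeSet) : H.Walk (φ a) (φ b) :=
  (w.transfer (H.comap φ) fun e he => mem_edgeSet_comap_iff.2 (hw e he)).map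
    (Hom.comap φ H) |>.copy (Hom.comap_apply ..) (Hom.comap_apply ..)

variable (φ : V ≃ W) {a b : V} (w : G.Walk a b) (hw : ∀ e ∈ w.edges, e.map φ ∈ H.edgeSet)

@[simp]
lemma edges_transferMap : (w.transferMap φ hw).edges = w.edges.map (Sym2.map φ) := by
  rw [transferMap, edges_copy, edges_map, edges_transfer]
  rfl

@[simp]
lemma support_transferMap : (w.transferMap φ hw).support = w.support.map φ := by
  rw [transferMap, support_copy, support_map, support_transfer]
  rfl

@[simp]
lemma length_transferMap : (w.transferMap φ hw).length = w.length := by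
  rw [transferMap, length_copy, length_map, length_transfer]

variable {φ w}

lemma IsPath.transferMap (hp : w.IsPath) : (w.transferMap φ hw).IsPath :=
  (isPath_copy _ _ _).2 ((hp.transfer _).map φ.injective)

lemma IsCycle.transferMap {c : G.Walk a a} (hc : c.IsCycle)
    (hw : ∀ e ∈ c.edges, e.map φ ∈ H.edgeSet) : (c.transferMap φ hw).IsCycle :=
  (isCycle_copy _ _).2 ((isCycle_map_iff_of_injective φ.injective).2 (hc.transfer _))

lemma IsPath.start_notMem_tail_support {a b : V} {p : G.Walk a b} (hp : p.IsPath) :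
    a ∉ p.support.tail :=
  (List.nodup_cons.1 (p.cons_tail_support ▸ hp.support_nodup)).1

end Walk

variable {A B : Set V}

structure IsSeparation (G : SimpleGraph V) (A B : Set V) : Prop where
  union_eq : A ∪ B = Set.univ
  not_adj : ∀ x ∈ A \ B, ∀ y ∈ B \ A, ¬G.Adj x y

namespace IsSeparation

lemma symm (hsep : G.IsSeparation A B) : G.IsSeparation B A :=
  ⟨Set.union_comm A B ▸ hsep.union_eq, fun x hx y hy hxy => hsep.not_adj y hy x hx hxy.symm⟩

lemma mem_or_mem (hsep : G.IsSeparation A B) (x : V) : x ∈ A ∨ x ∈ B :=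
  (Set.mem_union ..).1 (hsep.union_eq ▸ Set.mem_univ x)

lemma mem_left_of_adj (hsep : G.IsSeparation A B) {x y : V} (hx : x ∈ A \ B) (hxy : G.Adj x y) :
    y ∈ A :=
  (hsep.mem_or_mem y).elim id fun hyB => by_contra fun hyA => hsep.not_adj x hx y ⟨hyB, hyA⟩ hxy

end IsSeparation

namespace Walk

lemma IsPath.support_subset_left (hsep : G.IsSeparation A B) {a b : V} {w : G.Walk a b}
    (hw : w.IsPath) (hS : ∀ z ∈ w.support, z ∈ A ∩ B → z = b) (ha : a ∈ A) :
    ∀ z ∈ w.support, z ∈ A := by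
  induction w with
  | nil => simpa using ha
  | @cons a c b h w ih =>
    rw [cons_isPath_iff] at hw
    have haB : a ∉ B := fun haB =>
      hw.2 (hS a (start_mem_support _) ⟨ha, haB⟩ ▸ w.end_mem_support)
    simp only [support_cons, List.forall_mem_cons] at hS ⊢
    exact ⟨ha, ih hw.1 hS.2 (hsep.mem_left_of_adj ⟨ha, haB⟩ h)⟩

lemma IsPath.support_subset_or (hsep : G.IsSeparation A B) {a b : V} {w : G.Walk a b}
    (hw : w.IsPath) (hS : ∀ z ∈ w.support, z ∈ A ∩ B → z = b) :
    (∀ z ∈ w.support, z ∈ A) ∨ ∀ z ∈ w.support, z ∈ B :=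
  (hsep.mem_or_mem a).imp (hw.support_subset_left hsep hS)
    (hw.support_subset_left hsep.symm fun z hz hzS => hS z hz hzS.symm)

lemma IsPath.support_subset_or_of_inter_eq (hsep : G.IsSeparation A B) {u v : V}
    (hAB : A ∩ B = {u, v}) {p : G.Walk u v} (hp : p.IsPath) :
    (∀ z ∈ p.support, z ∈ A) ∨ ∀ z ∈ p.support, z ∈ B := by
  have hu : u ∈ A ∩ B := hAB ▸ Set.mem_insert u {v}
  cases p with
  | nil => simp [hu.1]
  | cons h p =>
    rw [cons_isPath_iff] at hp
    have hS : ∀ z ∈ p.support, z ∈ A ∩ B → z = v := fun z hz hzS => by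
      rw [hAB] at hzS
      rcases hzS with rfl | rfl
      exacts [absurd hz hp.2, rfl]
    simp only [support_cons, List.forall_mem_cons]
    exact (hp.1.support_subset_or hsep hS).imp (⟨hu.1, ·⟩) (⟨hu.2, ·⟩)

lemma IsCycle.support_subset_or_of_start (hsep : G.IsSeparation A B) {a : V} {c : G.Walk a a}
    (hc : c.IsCycle) (hS : ∀ z ∈ c.support, z ∈ A ∩ B → z = a) :
    (∀ z ∈ c.support, z ∈ A) ∨ ∀ z ∈ c.support, z ∈ B := by
  cases c with
  | nil => exact absurd hc not_isCycle_nil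
  | cons h p =>
    rw [cons_isCycle_iff] at hc
    simp only [support_cons, List.forall_mem_cons] at hS ⊢
    exact (hc.1.support_subset_or hsep hS.2).imp
      (fun hA => ⟨hA _ p.end_mem_support, hA⟩) (fun hB => ⟨hB _ p.end_mem_support, hB⟩)

lemma IsCycle.support_subset_or (hsep : G.IsSeparation A B) {a b : V} {c : G.Walk a a}
    (hc : c.IsCycle) (hS : ∀ z ∈ c.support, z ∈ A ∩ B → z = b) :
    (∀ z ∈ c.support, z ∈ A) ∨ ∀ z ∈ c.support, z ∈ B := by
  classical
  by_cases hb : b ∈ c.support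
  · simpa only [mem_support_rotate_iff] using (hc.rotate hb).support_subset_or_of_start hsep
      fun z hz => hS z ((mem_support_rotate_iff ..).1 hz)
  · exact hc.support_subset_or_of_start hsep fun z hz hzS => absurd (hS z hz hzS ▸ hz) hb

lemma IsCycle.mem_support_of_not_subset (hsep : G.IsSeparation A B) {u v : V}
    (hAB : A ∩ B = {u, v}) {a : V} {c : G.Walk a a} (hc : c.IsCycle)
    (hA : ¬∀ z ∈ c.support, z ∈ A) (hB : ¬∀ z ∈ c.support, z ∈ B) : v ∈ c.support := by
  by_contra hv
  refine (hc.support_subset_or hsep (b := u) fun z hz hzS => ?_).elim hA hB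
  rw [hAB] at hzS
  rcases hzS with rfl | rfl
  exacts [rfl, absurd hz hv]

end Walk

end SimpleGraph

section WhitneySwitch

open Classical Walk

variable {V : Type*} {G : SimpleGraph V} {A B : Set V} {u v : V}

lemma WhitneySep.isSeparation (h : WhitneySep G A B) : G.IsSeparation A B :=
  ⟨h.1, h.2.2.2.2⟩

lemma WhitneySep.ne_of_inter_eq (h : WhitneySep G A B) (hAB : A ∩ B = {u, v}) : u ≠ v := by
  obtain ⟨u', v', hne, hAB'⟩ := h.2.2.2.1
  rintro rfl
  rcases Set.pair_eq_pair_iff.1 (hAB'.symm.trans hAB) with ⟨h₁, h₂⟩ | ⟨h₁, h₂⟩ <;>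
    exact hne (h₁.trans h₂.symm)

lemma swap_apply_of_notMem_inter (hAB : A ∩ B = {u, v}) {x : V} (hx : x ∉ A ∩ B) :
    Equiv.swap u v x = x := by
  rw [hAB] at hx
  exact Equiv.swap_apply_of_ne_of_ne (fun h => hx (by simp [h])) (fun h => hx (by simp [h]))

lemma swap_mem_inter (hAB : A ∩ B = {u, v}) {x : V} (hx : x ∈ A ∩ B) :
    Equiv.swap u v x ∈ A ∩ B := by
  rw [hAB] at hx ⊢
  rcases hx with rfl | rfl <;> simp

lemma swap_mem_right (hAB : A ∩ B = {u, v}) {x : V} (hx : x ∈ B) : Equiv.swap u v x ∈ B := by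
  by_cases hS : x ∈ A ∩ B
  · exact (swap_mem_inter hAB hS).2
  · rwa [swap_apply_of_notMem_inter hAB hS]

lemma swap_mem_diff_iff (hAB : A ∩ B = {u, v}) {x : V} :
    Equiv.swap u v x ∈ B \ A ↔ x ∈ B \ A := by
  by_cases hx : x ∈ A ∩ B
  · simp [hx.1, (swap_mem_inter hAB hx).1]
  · rw [swap_apply_of_notMem_inter hAB hx]

lemma switchEdgeMap_of_exists {e : Sym2 V} (h : ∃ x ∈ e, x ∈ B \ A) :
    switchEdgeMap B A u v e = e.map (Equiv.swap u v) :=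
  if_pos h

lemma switchEdgeMap_of_not_exists {e : Sym2 V} (h : ¬∃ x ∈ e, x ∈ B \ A) :
    switchEdgeMap B A u v e = e :=
  if_neg h

lemma switchEdgeMap_involutive (hAB : A ∩ B = {u, v}) :
    Function.Involutive (switchEdgeMap B A u v) := by
  intro e
  by_cases h : ∃ x ∈ e, x ∈ B \ A
  · have h' : ∃ x ∈ e.map (Equiv.swap u v), x ∈ B \ A := by
      obtain ⟨x, hx, hxBA⟩ := h
      exact ⟨_, Sym2.mem_map.2 ⟨x, hx, rfl⟩, (swap_mem_diff_iff hAB).2 hxBA⟩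
    rw [switchEdgeMap_of_exists h, switchEdgeMap_of_exists h', Sym2.map_map]
    simp
  · rw [switchEdgeMap_of_not_exists h, switchEdgeMap_of_not_exists h]

lemma mem_edgeSet_wswitch_iff (hAB : A ∩ B = {u, v}) {e : Sym2 V} :
    e ∈ (wswitch G B u v).edgeSet ↔ switchEdgeMap B A u v e ∈ G.edgeSet := by
  induction e using Sym2.ind with
  | _ x y =>
    have hdiff : B \ {u, v} = B \ A := by rw [← hAB, Set.sdiff_inter_self_eq_sdiff]
    have hmem : (∃ z ∈ s(x, y), z ∈ B \ A) ↔ x ∈ B \ A ∨ y ∈ B \ A := by simp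
    rw [SimpleGraph.mem_edgeSet]
    change (if _ then _ else _) ↔ _
    rw [switchEdgeMap]
    simp only [hdiff, hmem]
    split_ifs <;> rfl

lemma switchEdgeMap_mem_edgeSet_wswitch_iff (hAB : A ∩ B = {u, v}) {e : Sym2 V} :
    switchEdgeMap B A u v e ∈ (wswitch G B u v).edgeSet ↔ e ∈ G.edgeSet := by
  rw [mem_edgeSet_wswitch_iff hAB, switchEdgeMap_involutive hAB]

lemma bijOn_switchEdgeMap (hAB : A ∩ B = {u, v}) :
    Set.BijOn (switchEdgeMap B A u v) G.edgeSet (wswitch G B u v).edgeSet :=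
  have hinv := switchEdgeMap_involutive hAB
  Set.InvOn.bijOn ⟨fun e _ => hinv e, fun e _ => hinv e⟩
    (fun _ => (switchEdgeMap_mem_edgeSet_wswitch_iff hAB).2)
    (fun _ => (mem_edgeSet_wswitch_iff hAB).1)

lemma wswitch_wswitch (hAB : A ∩ B = {u, v}) : wswitch (wswitch G B u v) B u v = G :=
  edgeSet_injective <| Set.ext fun _ => by
    rw [mem_edgeSet_wswitch_iff hAB, mem_edgeSet_wswitch_iff hAB, switchEdgeMap_involutive hAB]

lemma isSeparation_wswitch (hsep : G.IsSeparation A B) (hAB : A ∩ B = {u, v}) :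
    (wswitch G B u v).IsSeparation A B := by
  refine ⟨hsep.union_eq, fun x hx y hy hxy => ?_⟩
  have h := (mem_edgeSet_wswitch_iff hAB).1 ((SimpleGraph.mem_edgeSet _).2 hxy)
  rw [switchEdgeMap_of_exists ⟨y, Sym2.mem_mk_right x y, hy⟩, Sym2.map_mk,
    swap_apply_of_notMem_inter hAB fun h => hx.2 h.2,
    swap_apply_of_notMem_inter hAB fun h => hy.2 h.1] at h
  exact hsep.not_adj x hx y hy h

lemma switchEdgeMap_eq_self {e : Sym2 V} (he : ∀ x ∈ e, x ∈ A) : switchEdgeMap B A u v e = e :=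
  switchEdgeMap_of_not_exists fun ⟨x, hx, hxBA⟩ => hxBA.2 (he x hx)

lemma switchEdgeMap_eq_map_swap (hAB : A ∩ B = {u, v}) {e : Sym2 V} (hd : ¬e.IsDiag)
    (he : ∀ x ∈ e, x ∈ B) : switchEdgeMap B A u v e = e.map (Equiv.swap u v) := by
  by_cases h : ∃ x ∈ e, x ∈ B \ A
  · exact switchEdgeMap_of_exists h
  rw [switchEdgeMap_of_not_exists h]
  induction e using Sym2.ind with
  | _ x y =>
    have hS : ∀ z ∈ s(x, y), z = u ∨ z = v := fun z hz => by
      have hz : z ∈ A ∩ B := ⟨not_not.1 fun hzA => h ⟨z, hz, he z hz, hzA⟩, he z hz⟩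
      simpa [hAB] using hz
    rcases hS x (Sym2.mem_mk_left x y) with rfl | rfl <;>
      rcases hS y (Sym2.mem_mk_right x y) with rfl | rfl <;> simp_all [Sym2.eq_swap]

variable {a b : V} {w : G.Walk a b}

lemma switchEdgeMap_of_mem_edges_of_subset_left (hw : ∀ z ∈ w.support, z ∈ A) {e : Sym2 V}
    (he : e ∈ w.edges) : switchEdgeMap B A u v e = e :=
  switchEdgeMap_eq_self fun _ hx => hw _ (Walk.mem_support_of_mem_edges he hx)

lemma switchEdgeMap_of_mem_edges_of_subset_right (hAB : A ∩ B = {u, v})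
    (hw : ∀ z ∈ w.support, z ∈ B) {e : Sym2 V} (he : e ∈ w.edges) :
    switchEdgeMap B A u v e = e.map (Equiv.swap u v) :=
  switchEdgeMap_eq_map_swap hAB (G.not_isDiag_of_mem_edgeSet (w.edges_subset_edgeSet he))
    fun _ hx => hw _ (Walk.mem_support_of_mem_edges he hx)

lemma mem_edgeSet_wswitch_of_subset_left (hAB : A ∩ B = {u, v})
    (hw : ∀ z ∈ w.support, z ∈ A) {e : Sym2 V} (he : e ∈ w.edges) :
    e ∈ (wswitch G B u v).edgeSet := by
  rw [mem_edgeSet_wswitch_iff hAB, switchEdgeMap_of_mem_edges_of_subset_left hw he]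
  exact w.edges_subset_edgeSet he

lemma map_swap_mem_edgeSet_wswitch_of_subset_right (hAB : A ∩ B = {u, v})
    (hw : ∀ z ∈ w.support, z ∈ B) {e : Sym2 V} (he : e ∈ w.edges) :
    e.map (Equiv.swap u v) ∈ (wswitch G B u v).edgeSet := by
  rw [← switchEdgeMap_of_mem_edges_of_subset_right hAB hw he,
    switchEdgeMap_mem_edgeSet_wswitch_iff hAB]
  exact w.edges_subset_edgeSet he

lemma edgeCycle_image_of_subset_left (hAB : A ∩ B = {u, v}) {a : V} {c : G.Walk a a}
    (hc : c.IsCycle) (hcA : ∀ z ∈ c.support, z ∈ A) :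
    EdgeCycle (wswitch G B u v) (switchEdgeMap B A u v '' {e | e ∈ c.edges}) := by
  refine ⟨a, c.transfer _ fun e => mem_edgeSet_wswitch_of_subset_left hAB hcA, hc.transfer _, ?_⟩
  rw [edges_transfer]
  exact Set.EqOn.image_eq_self fun e => switchEdgeMap_of_mem_edges_of_subset_left hcA

lemma edgeCycle_image_of_subset_right (hAB : A ∩ B = {u, v}) {a : V} {c : G.Walk a a}
    (hc : c.IsCycle) (hcB : ∀ z ∈ c.support, z ∈ B) :
    EdgeCycle (wswitch G B u v) (switchEdgeMap B A u v '' {e | e ∈ c.edges}) := by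
  refine ⟨_, c.transferMap (Equiv.swap u v)
    fun e => map_swap_mem_edgeSet_wswitch_of_subset_right hAB hcB, hc.transferMap _, ?_⟩
  rw [edges_transferMap, List.image_setOf_mem,
    List.map_congr_left fun e => switchEdgeMap_of_mem_edges_of_subset_right hAB hcB]

lemma edgeCycle_image_append (hAB : A ∩ B = {u, v}) {p : G.Walk u v} {q : G.Walk v u}
    (hp : p.IsPath) (hq : q.IsPath) (hpq : (p.append q).IsCycle)
    (hpA : ∀ z ∈ p.support, z ∈ A) (hqB : ∀ z ∈ q.support, z ∈ B) :
    EdgeCycle (wswitch G B u v) (switchEdgeMap B A u v '' {e | e ∈ (p.append q).edges}) := by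
  let p' := p.transfer _ fun e => mem_edgeSet_wswitch_of_subset_left hAB hpA
  let q' := (q.transferMap (Equiv.swap u v)
    fun e => map_swap_mem_edgeSet_wswitch_of_subset_right hAB hqB).copy
      (Equiv.swap_apply_right u v) (Equiv.swap_apply_left u v)
  have hp' : p'.IsPath := hp.transfer _
  have hq' : q'.reverse.IsPath := ((isPath_copy ..).2 (hq.transferMap _)).reverse
  have hdisj : p'.support.tail.Disjoint q'.reverse.support.tail := by
    intro z hzp hzq
    have hzA : z ∈ A := hpA z (List.mem_of_mem_tail (by simpa [p'] using hzp))
    have hzB : z ∈ B := by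
      have hz : z ∈ q'.support := by simpa using List.mem_of_mem_tail hzq
      obtain ⟨y, hy, rfl⟩ : ∃ y ∈ q.support, Equiv.swap u v y = z := by simpa [q'] using hz
      exact swap_mem_right hAB (hqB y hy)
    have hz : z ∈ A ∩ B := ⟨hzA, hzB⟩
    rw [hAB] at hz
    rcases hz with rfl | rfl
    exacts [hp'.start_notMem_tail_support hzp, hq'.start_notMem_tail_support hzq]
  have hlen : 1 < p'.length ∨ 1 < q'.reverse.length := by
    have := hpq.three_le_length
    simp only [length_append] at this
    simp only [p', q', length_transfer, length_reverse, length_copy, length_transferMap]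
    omega
  refine ⟨u, p'.append q'.reverse, hp'.isCycle_append hq' hdisj hlen, ?_⟩
  rw [List.image_setOf_mem, edges_append, List.map_append,
    List.map_congr_left fun e => switchEdgeMap_of_mem_edges_of_subset_left hpA,
    List.map_congr_left fun e => switchEdgeMap_of_mem_edges_of_subset_right hAB hqB]
  ext e
  simp [p', q']

lemma edgeCycle_image_of_mem_support (hsep : G.IsSeparation A B) (hAB : A ∩ B = {u, v})
    (hne : u ≠ v) {c : G.Walk u u} (hc : c.IsCycle) (hv : v ∈ c.support)
    (hA : ¬∀ z ∈ c.support, z ∈ A) (hB : ¬∀ z ∈ c.support, z ∈ B) :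
    EdgeCycle (wswitch G B u v) (switchEdgeMap B A u v '' {e | e ∈ c.edges}) := by
  have hp : (c.takeUntil v hv).IsPath := hc.isPath_takeUntil hv
  have hspec := c.take_spec hv
  set p := c.takeUntil v hv
  set q := c.dropUntil v hv
  rw [← hspec] at hc hA hB ⊢
  have hq : q.IsPath := hc.isPath_of_append_right (not_nil_of_ne hne)
  simp only [mem_support_append_iff] at hA hB
  rcases hp.support_subset_or_of_inter_eq hsep hAB with hpA | hpB <;>
    rcases hq.support_subset_or_of_inter_eq hsep (hAB.trans (Set.pair_comm u v)) with hqA | hqB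
  · exact absurd (fun z hz => hz.elim (hpA z) (hqA z)) hA
  · exact edgeCycle_image_append hAB hp hq hc hpA hqB
  · have hcyc : (q.reverse.append p.reverse).IsCycle := by
      rw [← reverse_append]
      exact hc.reverse
    have := edgeCycle_image_append hAB hq.reverse hp.reverse hcyc (by simpa using hqA)
      (by simpa using hpB)
    simpa only [← reverse_append, edges_reverse, List.mem_reverse] using this
  · exact absurd (fun z hz => hz.elim (hpB z) (hqB z)) hB

lemma EdgeCycle.image_switchEdgeMap {s : Set (Sym2 V)} (hs : EdgeCycle G s)
    (hsep : G.IsSeparation A B) (hAB : A ∩ B = {u, v}) (hne : u ≠ v) :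
    EdgeCycle (wswitch G B u v) (switchEdgeMap B A u v '' s) := by
  obtain ⟨a, c, hc, rfl⟩ := hs
  by_cases hA : ∀ z ∈ c.support, z ∈ A
  · exact edgeCycle_image_of_subset_left hAB hc hA
  by_cases hB : ∀ z ∈ c.support, z ∈ B
  · exact edgeCycle_image_of_subset_right hAB hc hB
  have hu := hc.mem_support_of_not_subset hsep (hAB.trans (Set.pair_comm u v)) hA hB
  have hv := hc.mem_support_of_not_subset hsep hAB hA hB
  have hedges : {e | e ∈ c.edges} = {e | e ∈ (c.rotate u hu).edges} :=
    Set.ext fun _ => (c.rotate_edges u hu).perm.mem_iff.symm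
  rw [hedges]
  exact edgeCycle_image_of_mem_support hsep hAB hne (hc.rotate hu)
    ((mem_support_rotate_iff ..).2 hv) (by simpa only [mem_support_rotate_iff] using hA)
    (by simpa only [mem_support_rotate_iff] using hB)

end WhitneySwitch

theorem stmt9_general {V : Type*} (G : SimpleGraph V)
    (A B : Set V) (u v : V)
    (hsep : WhitneySep G A B) (huv : A ∩ B = {u, v}) :
    Set.BijOn (switchEdgeMap B A u v) G.edgeSet (wswitch G B u v).edgeSet ∧
    ∀ s : Set (Sym2 V), s ⊆ G.edgeSet →
      (EdgeCycle G s ↔ EdgeCycle (wswitch G B u v) (switchEdgeMap B A u v '' s)) := by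
  have hne := hsep.ne_of_inter_eq huv
  have hsep := hsep.isSeparation
  refine ⟨bijOn_switchEdgeMap huv, fun s _ => ⟨(·.image_switchEdgeMap hsep huv hne), fun h => ?_⟩⟩
  have := h.image_switchEdgeMap (isSeparation_wswitch hsep huv) huv hne
  rwa [wswitch_wswitch huv, Set.image_image, funext (switchEdgeMap_involutive huv),
    Set.image_id'] at this

/-- The identity map on the edges (interpreting each edge of `G[A]` and of `G[B]`
as itself) is a 2-isomorphism from `G` to the Whitney switch `G'` of `G`: it is a
bijection of the edge sets, and a set of edges forms a cycle in `G` iff its image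
forms a cycle in `G'`. -/
theorem stmt9 {V : Type*} [Fintype V] (G : SimpleGraph V)
    (A B : Set V) (u v : V)
    (hG : TwoConnected G) (hsep : WhitneySep G A B) (huv : A ∩ B = {u, v}) :
    Set.BijOn (switchEdgeMap B A u v) G.edgeSet (wswitch G B u v).edgeSet ∧
    ∀ s : Set (Sym2 V), s ⊆ G.edgeSet →
      (EdgeCycle G s ↔ EdgeCycle (wswitch G B u v) (switchEdgeMap B A u v '' s)) :=
  stmt9_general G A B u v hsep huv
end
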